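/- An hypersemigroup H is left quasi-regular (a ∈ H*{a}*H*{a} for every a ∈ H) if and only if for any two left ideals A and B of H, A ∩ B ⊆ A*B. -/
import Mathlib


variable {H : Type*}

/-- Subset product induced by a hyperoperation. -/
def hprod (m : H → H → Set H) (A B : Set H) : Set H :=
  ⋃ a ∈ A, ⋃ b ∈ B, m a b

lemma mem_hprod {m : H → H → Set H} {A B : Set H} {x : H} :
    x ∈ hprod m A B ↔ ∃ a ∈ A, ∃ b ∈ B, x ∈ m a b := by
  simp [hprod]

lemma hprod_mono {m : H → H → Set H} {A A' B B' : Set H}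
    (hA : A ⊆ A') (hB : B ⊆ B') : hprod m A B ⊆ hprod m A' B' := by
  intro x hx
  rcases mem_hprod.1 hx with ⟨a, ha, b, hb, hx⟩
  exact mem_hprod.2 ⟨a, hA ha, b, hB hb, hx⟩

theorem stmt15 (m : H → H → Set H)
    (hne : ∀ a b : H, (m a b).Nonempty)
    (hassoc : ∀ A B C : Set H,
      hprod m (hprod m A B) C = hprod m A (hprod m B C)) :
    (∀ a : H, a ∈ hprod m (hprod m (hprod m Set.univ {a}) Set.univ) {a}) ↔
    (∀ A B : Set H, (A.Nonempty ∧ hprod m Set.univ A ⊆ A) →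
      (B.Nonempty ∧ hprod m Set.univ B ⊆ B) → A ∩ B ⊆ hprod m A B) := by
  have key : ∀ a : H,
      hprod m (hprod m (hprod m Set.univ {a}) Set.univ) {a}
        = hprod m (hprod m Set.univ {a}) (hprod m Set.univ {a}) := by
    intro a; rw [hassoc]
  constructor
  · intro hqr A B ⟨_, hA⟩ ⟨_, hB⟩ c hc
    have h := hqr c
    rw [key] at h
    have hAc : hprod m Set.univ {c} ⊆ A :=
      (hprod_mono (subset_refl _) (Set.singleton_subset_iff.2 hc.1)).trans hA
    have hBc : hprod m Set.univ {c} ⊆ B :=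
      (hprod_mono (subset_refl _) (Set.singleton_subset_iff.2 hc.2)).trans hB
    exact hprod_mono hAc hBc h
  · intro hid a
    set S : Set H := hprod m Set.univ {a} with hS
    set L : Set H := insert a S with hL
    have hSsub : S ⊆ L := Set.subset_insert _ _
    have haL : a ∈ L := Set.mem_insert _ _
    have hideal : hprod m Set.univ L ⊆ L := by
      intro x hx
      rcases mem_hprod.1 hx with ⟨u, -, v, hv, hxv⟩
      rcases hv with rfl | hv
      · exact hSsub (mem_hprod.2 ⟨u, trivial, v, rfl, hxv⟩)
      · have hx' : x ∈ hprod m Set.univ S :=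
          mem_hprod.2 ⟨u, trivial, v, hv, hxv⟩
        rw [hS, ← hassoc] at hx'
        exact hSsub (hprod_mono (Set.subset_univ _) (subset_refl _) hx')
    have hmem : a ∈ hprod m L L :=
      hid L L ⟨⟨a, haL⟩, hideal⟩ ⟨⟨a, haL⟩, hideal⟩ ⟨haL, haL⟩
    rw [key]
    rcases mem_hprod.1 hmem with ⟨x, hx, y, hy, haxy⟩
    rcases Set.mem_insert_iff.1 hx with hxa | hx
    · rcases Set.mem_insert_iff.1 hy with hya | hy
      · rw [hxa, hya] at haxy
        -- a ∈ m a a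
        have h1 : a ∈ hprod m ({a} : Set H) {a} :=
          mem_hprod.2 ⟨a, rfl, a, rfl, haxy⟩
        have hsub : ({a} : Set H) ⊆ hprod m {a} {a} :=
          Set.singleton_subset_iff.2 h1
        have h2 : a ∈ hprod m (hprod m ({a} : Set H) {a}) (hprod m {a} {a}) :=
          hprod_mono hsub hsub h1
        exact hprod_mono (hprod_mono (Set.subset_univ _) (subset_refl _))
          (hprod_mono (Set.subset_univ _) (subset_refl _)) h2
      · rw [hxa] at haxy
        -- a ∈ m a y, y ∈ S
        have h1 : a ∈ hprod m ({a} : Set H) S :=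
          mem_hprod.2 ⟨a, rfl, y, hy, haxy⟩
        have hsub : ({a} : Set H) ⊆ hprod m {a} S := Set.singleton_subset_iff.2 h1
        have h2 : a ∈ hprod m (hprod m ({a} : Set H) S) S :=
          hprod_mono hsub (subset_refl _) h1
        refine hprod_mono ?_ (subset_refl _) h2
        intro z hz
        rw [hS, ← hassoc] at hz
        exact hprod_mono (Set.subset_univ _) (subset_refl _) hz
    · rcases Set.mem_insert_iff.1 hy with hya | hy
      · rw [hya] at haxy
        -- a ∈ m x a, x ∈ S
        have h1 : a ∈ hprod m S ({a} : Set H) :=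
          mem_hprod.2 ⟨x, hx, a, rfl, haxy⟩
        have hsub : ({a} : Set H) ⊆ hprod m S {a} := Set.singleton_subset_iff.2 h1
        have h2 : a ∈ hprod m S (hprod m S ({a} : Set H)) :=
          hprod_mono (subset_refl _) hsub h1
        rw [← hassoc] at h2
        have h3 : a ∈ hprod m (hprod m S Set.univ) ({a} : Set H) :=
          hprod_mono (hprod_mono (subset_refl _) (Set.subset_univ _)) (subset_refl _) h2
        rw [hassoc] at h3
        exact h3
      · exact mem_hprod.2 ⟨x, hx, y, hy, haxy⟩
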